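/- For all natural numbers i ≥ 1, j and real k, b_{i,j+1,k} = Σ_{r=0}^{i-1} C(i,r) · b_{r,j,k}. -/
import Mathlib

open Finset

noncomputable def msn (i j : ℕ) (k : ℝ) : ℝ :=
  ∑ r ∈ Finset.range (j + 1), (j.choose r : ℝ) * (-1 : ℝ) ^ (j - r) * ((r : ℝ) + k) ^ i

lemma msn_eq (i j : ℕ) (k : ℝ) :
    msn i j k = ∑ r ∈ Finset.range (j + 1),
      (j.choose r : ℝ) * (-1 : ℝ) ^ j * (-1 : ℝ) ^ r * ((r : ℝ) + k) ^ i := by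
  unfold msn
  refine Finset.sum_congr rfl fun r hr => ?_
  have hr' : r ≤ j := Nat.lt_succ_iff.mp (Finset.mem_range.mp hr)
  have h : ((-1 : ℝ)) ^ (j - r) = (-1 : ℝ) ^ j * (-1 : ℝ) ^ r := by
    have h2 : j - r + r = j := Nat.sub_add_cancel hr'
    have : ((-1 : ℝ)) ^ (j - r) * ((-1 : ℝ) ^ r * (-1 : ℝ) ^ r) = (-1 : ℝ) ^ j * (-1)^r := by
      rw [← mul_assoc, ← pow_add, h2]
    simpa [← pow_add, ← two_mul, pow_mul] using this
  rw [h]; ring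

lemma l1 (i j : ℕ) (k : ℝ) : msn i (j + 1) k = msn i j (k + 1) - msn i j k := by
  rw [msn_eq, msn_eq, msn_eq]
  rw [Finset.sum_range_succ' (fun r => ((j+1).choose r : ℝ) * (-1 : ℝ) ^ (j+1) * (-1 : ℝ) ^ r * ((r : ℝ) + k) ^ i)]
  have hP : ∀ r : ℕ, (((j+1).choose (r+1) : ℝ)) = (j.choose r : ℝ) + (j.choose (r+1) : ℝ) := by
    intro r; rw [Nat.choose_succ_succ]; push_cast; ring
  have e1 : ∑ r ∈ Finset.range (j+1),
      ((j+1).choose (r+1) : ℝ) * (-1 : ℝ) ^ (j+1) * (-1 : ℝ) ^ (r+1) * (((r:ℝ)+1) + k) ^ i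
      = (∑ r ∈ Finset.range (j+1), (j.choose r : ℝ) * (-1:ℝ)^j * (-1:ℝ)^r * ((r:ℝ) + (k+1)) ^ i)
      + (∑ r ∈ Finset.range (j+1), (j.choose (r+1) : ℝ) * (-1:ℝ)^j * (-1:ℝ)^r * (((r:ℝ)+1) + k) ^ i) := by
    rw [← Finset.sum_add_distrib]
    refine Finset.sum_congr rfl fun r hr => ?_
    rw [hP r, pow_succ, pow_succ]
    ring_nf
  simp only [Nat.cast_add, Nat.cast_one] at e1 ⊢
  rw [e1]
  -- now handle second piece + boundary term = - msn part
  have e2 : (∑ r ∈ Finset.range (j+1), (j.choose (r+1) : ℝ) * (-1:ℝ)^j * (-1:ℝ)^r * (((r:ℝ)+1) + k) ^ i)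
      + ((j+1).choose 0 : ℝ) * (-1:ℝ)^(j+1) * (-1:ℝ)^0 * ((0:ℝ) + k)^i
      = - ∑ r ∈ Finset.range (j+1), (j.choose r : ℝ) * (-1:ℝ)^j * (-1:ℝ)^r * ((r:ℝ) + k) ^ i := by
    rw [Finset.sum_range_succ' (fun r => (j.choose r : ℝ) * (-1:ℝ)^j * (-1:ℝ)^r * ((r:ℝ) + k) ^ i)]
    rw [Finset.sum_range_succ (fun r => (j.choose (r+1) : ℝ) * (-1:ℝ)^j * (-1:ℝ)^r * (((r:ℝ)+1) + k) ^ i)]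
    simp [Nat.choose_succ_self]
    simp only [pow_succ]
    rw [← Finset.sum_neg_distrib]
    rw [Finset.sum_congr rfl (fun x _ => by ring :
      ∀ x ∈ Finset.range j, -((j.choose (x+1):ℝ) * (-1:ℝ)^j * ((-1:ℝ)^x * -1) * ((x:ℝ)+1+k)^i)
        = (j.choose (x+1):ℝ) * (-1:ℝ)^j * (-1:ℝ)^x * ((x:ℝ)+1+k)^i)]
    ring
  push_cast at e2 ⊢
  linarith [e2]

lemma l2 (i j : ℕ) (k : ℝ) :
    msn i j (k + 1) = ∑ r ∈ Finset.range (i + 1), (i.choose r : ℝ) * msn r j k := by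
  unfold msn
  simp only [Finset.mul_sum]
  rw [Finset.sum_comm]
  refine Finset.sum_congr rfl fun s hs => ?_
  have hb : ((s:ℝ)+k+1)^i = ∑ r ∈ Finset.range (i+1), (i.choose r : ℝ) * ((s:ℝ)+k)^r := by
    have h := add_pow ((s:ℝ)+k) 1 i
    simp only [one_pow, mul_one] at h
    rw [h]
    exact Finset.sum_congr rfl fun r _ => by ring
  rw [show ((s:ℝ)+(k+1)) = (s:ℝ)+k+1 by ring, hb, Finset.mul_sum]
  exact Finset.sum_congr rfl fun r _ => by ring

theorem stmt (i j : ℕ) (hi : 1 ≤ i) (k : ℝ) : msn i (j + 1) k = ∑ r ∈ Finset.range i, (i.choose r : ℝ) * msn r j k := by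
  rw [l1, l2, Finset.sum_range_succ]
  simp [Nat.choose_self]
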